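/- arXiv:2103.16514 — 3 statements merged into one kernel-verified Lean document; each statement's English description precedes it below -/
import Mathlib

section
/- Acausal small gain theorem for discrete-time systems: Let M1 and M2 be maps from real-valued sequences indexed by the natural numbers to real-valued sequences. Assume (i) there exist constants α1, α2, β1, β2 > 0 such that for every square-summable input e, the outputs satisfy ‖M1(e)‖₂ ≤ α1‖e‖₂ + β1 and ‖M2(e)‖₂ ≤ α2‖e‖₂ + β2; (ii) the small-gain condition α1·α2 < 1 holds; (iii) the cascade compositions are causal, i.e. for every sequence e and every finite T, the truncation at T of M1(M2(e)) equals the truncation at T of M1(M2(e_T)), and the truncation at T of M2(M1(e)) equals the truncation at T of M2(M1(e_T)), where e_T denotes e truncated at T; (iv) the truncated subadditivity condition holds: for ν ∈ {1,2} and all sequences e, f and all T, ‖(Mν(e+f))_T‖₂ ≤ ‖(Mν(e_T))_T‖₂ + ‖(Mν(f_T))_T‖₂. Then the feedback interconnection e1 = u1 + M2(e2), e2 = u2 + M1(e1) is finite gain ℓ2 stable: for all square-summable u1, u2 and all sequences e1, e2 satisfying the interconnection equations, e1 and e2 are square-summable and their ℓ2 norms are bounded by affine functions of ‖u1‖₂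 and ‖u2‖₂ with coefficients depending only on α1, α2, β1, β2. -/
open scoped ENNReal

/-- Truncation of a sequence at time `T`. -/
def trunc (T : ℕ) (f : ℕ → ℝ) : ℕ → ℝ := fun k => if k ≤ T then f k else 0

/-- A sequence is square-summable (belongs to ℓ2). -/
def SqSummable (f : ℕ → ℝ) : Prop := Summable fun k => (f k) ^ 2

/-- The ℓ2 norm of a sequence. -/
noncomputable def l2norm (f : ℕ → ℝ) : ℝ := Real.sqrt (∑' k, (f k) ^ 2)


lemma l2norm_nonneg (f : ℕ → ℝ) : 0 ≤ l2norm f := Real.sqrt_nonneg _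

lemma norm_rpow_eq (f : ℕ → ℝ) :
    (fun i => ‖f i‖ ^ (2 : ℝ≥0∞).toReal) = fun i => (f i) ^ 2 := by
  funext i
  rw [ENNReal.toReal_ofNat]
  rw [show ((2:ℝ)) = ((2:ℕ):ℝ) by norm_num, Real.rpow_natCast]
  simp [Real.norm_eq_abs, sq_abs]

lemma sqSummable_memℓp {f : ℕ → ℝ} (h : SqSummable f) : Memℓp f 2 :=
  memℓp_gen (by rw [norm_rpow_eq]; exact h)

lemma memℓp_sqSummable {f : ℕ → ℝ} (h : Memℓp f 2) : SqSummable f := by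
  have := h.summable (by norm_num : 0 < (2:ℝ≥0∞).toReal)
  rwa [norm_rpow_eq] at this

lemma l2norm_eq_norm (x : lp (fun _ : ℕ => ℝ) 2) : l2norm ⇑x = ‖x‖ := by
  rw [lp.norm_eq_tsum_rpow (by norm_num) x]
  rw [norm_rpow_eq]
  rw [l2norm, Real.sqrt_eq_rpow]
  norm_num

lemma l2norm_add_le {f g : ℕ → ℝ} (hf : SqSummable f) (hg : SqSummable g) :
    l2norm (f + g) ≤ l2norm f + l2norm g := by
  let F : lp (fun _ : ℕ => ℝ) 2 := ⟨f, sqSummable_memℓp hf⟩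
  let G : lp (fun _ : ℕ => ℝ) 2 := ⟨g, sqSummable_memℓp hg⟩
  have h1 : l2norm (f + g) = ‖F + G‖ := by
    rw [← l2norm_eq_norm (F + G), lp.coeFn_add]
  have hf' : l2norm f = ‖F‖ := by rw [← l2norm_eq_norm F]
  have hg' : l2norm g = ‖G‖ := by rw [← l2norm_eq_norm G]
  rw [h1, hf', hg']
  exact norm_add_le F G

lemma SqSummable.add {f g : ℕ → ℝ} (hf : SqSummable f) (hg : SqSummable g) :
    SqSummable (f + g) :=
  memℓp_sqSummable ((sqSummable_memℓp hf).add (sqSummable_memℓp hg))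

lemma sqSummable_trunc (T : ℕ) (f : ℕ → ℝ) : SqSummable (trunc T f) := by
  apply summable_of_ne_finset_zero (s := Finset.range (T+1))
  intro k hk
  simp only [Finset.mem_range, not_lt] at hk
  have : ¬ k ≤ T := by omega
  simp [trunc, this]

lemma l2norm_trunc_le {f : ℕ → ℝ} (hf : SqSummable f) (T : ℕ) :
    l2norm (trunc T f) ≤ l2norm f := by
  apply Real.sqrt_le_sqrt
  apply Summable.tsum_le_tsum _ (sqSummable_trunc T f) hf
  intro k
  by_cases h : k ≤ T <;> simp [trunc, h] <;> positivity

lemma trunc_add (T : ℕ) (u f : ℕ → ℝ) : trunc T (u + f) = trunc T u + trunc T f := by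
  funext k; by_cases h : k ≤ T <;> simp [trunc, h]

lemma l2norm_of_trunc_bound {f : ℕ → ℝ} {K : ℝ} (hK : 0 ≤ K)
    (h : ∀ T, l2norm (trunc T f) ≤ K) : SqSummable f ∧ l2norm f ≤ K := by
  have hsum : ∀ T : ℕ, ∑' k, (trunc T f k) ^ 2 = ∑ k ∈ Finset.range (T+1), (f k) ^ 2 := by
    intro T
    rw [tsum_eq_sum (s := Finset.range (T+1))]
    · apply Finset.sum_congr rfl
      intro k hk
      simp only [Finset.mem_range] at hk
      have : k ≤ T := by omega
      simp [trunc, this]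
    · intro k hk
      simp only [Finset.mem_range, not_lt] at hk
      have : ¬ k ≤ T := by omega
      simp [trunc, this]
  have hpart : ∀ n : ℕ, ∑ k ∈ Finset.range n, (f k) ^ 2 ≤ K ^ 2 := by
    intro n
    have h1 : ∑ k ∈ Finset.range n, (f k) ^ 2 ≤ ∑ k ∈ Finset.range (n+1), (f k) ^ 2 := by
      apply Finset.sum_le_sum_of_subset_of_nonneg
      · exact Finset.range_subset_range.mpr (by omega)
      · intro k _ _; positivity
    have h2 : ∑ k ∈ Finset.range (n+1), (f k) ^ 2 = ∑' k, (trunc n f k) ^ 2 := (hsum n).symm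
    have h3 : ∑' k, (trunc n f k) ^ 2 ≤ K ^ 2 := by
      have hn : (0:ℝ) ≤ ∑' k, (trunc n f k) ^ 2 := tsum_nonneg fun k => by positivity
      have := h n
      rw [l2norm] at this
      calc ∑' k, (trunc n f k) ^ 2 = (Real.sqrt (∑' k, (trunc n f k) ^ 2)) ^ 2 := by
            rw [Real.sq_sqrt hn]
        _ ≤ K ^ 2 := by apply pow_le_pow_left₀ (Real.sqrt_nonneg _) this
    linarith
  have hS : SqSummable f := summable_of_sum_range_le (fun k => by positivity) hpart
  refine ⟨hS, ?_⟩
  rw [l2norm]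
  have : ∑' k, (f k) ^ 2 ≤ K ^ 2 := Summable.tsum_le_of_sum_range_le hS hpart
  calc Real.sqrt (∑' k, (f k)^2) ≤ Real.sqrt (K^2) := Real.sqrt_le_sqrt this
    _ = K := Real.sqrt_sq hK

/-- **Acausal small gain theorem for discrete-time systems.** -/
theorem acausal_small_gain_theorem
    (M1 M2 : (ℕ → ℝ) → (ℕ → ℝ)) (α1 α2 β1 β2 : ℝ)
    (hα1 : 0 < α1) (hα2 : 0 < α2) (hβ1 : 0 < β1) (hβ2 : 0 < β2)
    (hgain1 : ∀ e : ℕ → ℝ, SqSummable e →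
      SqSummable (M1 e) ∧ l2norm (M1 e) ≤ α1 * l2norm e + β1)
    (hgain2 : ∀ e : ℕ → ℝ, SqSummable e →
      SqSummable (M2 e) ∧ l2norm (M2 e) ≤ α2 * l2norm e + β2)
    (hsg : α1 * α2 < 1)
    (hcausal1 : ∀ (e : ℕ → ℝ) (T : ℕ),
      trunc T (M1 (M2 e)) = trunc T (M1 (M2 (trunc T e))))
    (hcausal2 : ∀ (e : ℕ → ℝ) (T : ℕ),
      trunc T (M2 (M1 e)) = trunc T (M2 (M1 (trunc T e))))
    (hsub1 : ∀ (e f : ℕ → ℝ) (T : ℕ),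
      l2norm (trunc T (M1 (e + f))) ≤
        l2norm (trunc T (M1 (trunc T e))) + l2norm (trunc T (M1 (trunc T f))))
    (hsub2 : ∀ (e f : ℕ → ℝ) (T : ℕ),
      l2norm (trunc T (M2 (e + f))) ≤
        l2norm (trunc T (M2 (trunc T e))) + l2norm (trunc T (M2 (trunc T f)))) :
    ∃ c11 c12 d1 c21 c22 d2 : ℝ,
      ∀ u1 u2 e1 e2 : ℕ → ℝ, SqSummable u1 → SqSummable u2 →
        e1 = u1 + M2 e2 → e2 = u2 + M1 e1 →
        SqSummable e1 ∧ SqSummable e2 ∧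
        l2norm e1 ≤ c11 * l2norm u1 + c12 * l2norm u2 + d1 ∧
        l2norm e2 ≤ c21 * l2norm u1 + c22 * l2norm u2 + d2 := by
  have hδ : 0 < 1 - α1 * α2 := by linarith
  set δ := 1 - α1 * α2 with hδdef
  refine ⟨1 + α2 * (α1 / δ), α2 * (1 + α1 * α2 / δ), α2 * ((2*β1 + 2*α1*β2) / δ) + β2,
    α1 / δ, 1 + α1 * α2 / δ, (2*β1 + 2*α1*β2) / δ, ?_⟩
  intro u1 u2 e1 e2 hu1 hu2 he1 he2
  have hn1 : 0 ≤ l2norm u1 := l2norm_nonneg u1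
  have hn2 : 0 ≤ l2norm u2 := l2norm_nonneg u2
  set C := α1 * l2norm u1 + α1 * α2 * l2norm u2 + 2*β1 + 2*α1*β2 with hCdef
  have hCnn : 0 ≤ C := by
    have h1 : 0 ≤ α1 * l2norm u1 := mul_nonneg hα1.le hn1
    have h2 : 0 ≤ α1 * α2 * l2norm u2 := mul_nonneg (mul_nonneg hα1.le hα2.le) hn2
    nlinarith
  have hK : 0 ≤ C / δ := div_nonneg hCnn hδ.le
  -- key uniform bound on truncations of M1 e1
  have key : ∀ T, l2norm (trunc T (M1 e1)) ≤ C / δ := by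
    intro T
    have bnd1 : ∀ w : ℕ → ℝ, SqSummable w →
        l2norm (trunc T (M1 w)) ≤ α1 * l2norm w + β1 := fun w hw =>
      le_trans (l2norm_trunc_le (hgain1 w hw).1 T) (hgain1 w hw).2
    have bnd2 : ∀ w : ℕ → ℝ, SqSummable w →
        l2norm (trunc T (M2 w)) ≤ α2 * l2norm w + β2 := fun w hw =>
      le_trans (l2norm_trunc_le (hgain2 w hw).1 T) (hgain2 w hw).2
    set A := l2norm (trunc T (M1 e1)) with hAdef
    have hAnn : 0 ≤ A := l2norm_nonneg _
    have h1 : A ≤ l2norm (trunc T (M1 (trunc T u1)))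
        + l2norm (trunc T (M1 (trunc T (M2 e2)))) := by
      have := hsub1 u1 (M2 e2) T
      rw [← he1] at this
      exact this
    have h2 : l2norm (trunc T (M1 (trunc T u1))) ≤ α1 * l2norm u1 + β1 := by
      have ha := bnd1 (trunc T u1) (sqSummable_trunc T u1)
      have hb := l2norm_trunc_le hu1 T
      nlinarith
    have h4 : l2norm (trunc T (M2 e2)) ≤ α2 * l2norm u2 + β2 + (α2 * A + β2) := by
      have hs : l2norm (trunc T (M2 (u2 + M1 e1))) ≤
          l2norm (trunc T (M2 (trunc T u2))) + l2norm (trunc T (M2 (trunc T (M1 e1)))) :=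
        hsub2 u2 (M1 e1) T
      rw [← he2] at hs
      have ha := bnd2 (trunc T u2) (sqSummable_trunc T u2)
      have hb := l2norm_trunc_le hu2 T
      have hc := bnd2 (trunc T (M1 e1)) (sqSummable_trunc T (M1 e1))
      have hd := l2norm_trunc_le (sqSummable_trunc T (M1 e1)) T
      nlinarith
    have h3 : l2norm (trunc T (M1 (trunc T (M2 e2)))) ≤
        α1 * l2norm (trunc T (M2 e2)) + β1 := by
      have ha := bnd1 (trunc T (M2 e2)) (sqSummable_trunc T (M2 e2))
      have hb := l2norm_trunc_le (sqSummable_trunc T (M2 e2)) T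
      nlinarith
    have hfin : A ≤ α1 * α2 * A + C := by nlinarith
    rw [le_div_iff₀ hδ]
    nlinarith
  obtain ⟨hM1sum, hM1norm⟩ := l2norm_of_trunc_bound hK key
  have he2sum : SqSummable e2 := by rw [he2]; exact SqSummable.add hu2 hM1sum
  have he2norm : l2norm e2 ≤ l2norm u2 + C / δ := by
    rw [he2]
    exact le_trans (l2norm_add_le hu2 hM1sum) (by linarith)
  obtain ⟨hM2sum, hM2norm⟩ := hgain2 e2 he2sum
  have he1sum : SqSummable e1 := by rw [he1]; exact SqSummable.add hu1 hM2sum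
  have he1norm : l2norm e1 ≤ l2norm u1 + (α2 * l2norm e2 + β2) := by
    rw [he1]
    exact le_trans (l2norm_add_le hu1 hM2sum) (by linarith)
  refine ⟨he1sum, he2sum, ?_, ?_⟩
  · have hX : l2norm e2 ≤ α1 / δ * l2norm u1 + (1 + α1 * α2 / δ) * l2norm u2
        + (2*β1 + 2*α1*β2) / δ := by
      have : l2norm u2 + C / δ = α1 / δ * l2norm u1 + (1 + α1 * α2 / δ) * l2norm u2
          + (2*β1 + 2*α1*β2) / δ := by
        rw [hCdef]; field_simp; ring
      linarith
    nlinarith [mul_le_mul_of_nonneg_left hX hα2.le]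
  · have : l2norm u2 + C / δ = α1 / δ * l2norm u1 + (1 + α1 * α2 / δ) * l2norm u2
        + (2*β1 + 2*α1*β2) / δ := by
      rw [hCdef]; field_simp; ring
    linarith
end

section
/- Core small-gain inequality: Let u1, u2, e1, e2, y1, y2 be elements of a real normed space (in particular, square-summable real sequences with the ℓ2 norm) satisfying the feedback equations e1 = u1 + y2 and e2 = u2 + y1, together with the gain bounds ‖y1‖ ≤ α1‖e1‖ + β1 and ‖y2‖ ≤ α2‖e2‖ + β2 for nonnegative constants α1, α2, β1, β2. If α1·α2 < 1, then ‖e1‖ ≤ (‖u1‖ + α2‖u2‖ + β2 + α2·β1)/(1 − α1·α2) and ‖e2‖ ≤ (‖u2‖ + α1‖u1‖ + β1 + α1·β2)/(1 − α1·α2). -/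
/-- **Core small-gain inequality** in a real normed space. -/
theorem core_small_gain_inequality {E : Type*} [NormedAddCommGroup E] [NormedSpace ℝ E]
    (u1 u2 e1 e2 y1 y2 : E) (α1 α2 β1 β2 : ℝ)
    (hα1 : 0 ≤ α1) (hα2 : 0 ≤ α2) (hβ1 : 0 ≤ β1) (hβ2 : 0 ≤ β2)
    (hfb1 : e1 = u1 + y2) (hfb2 : e2 = u2 + y1)
    (hg1 : ‖y1‖ ≤ α1 * ‖e1‖ + β1) (hg2 : ‖y2‖ ≤ α2 * ‖e2‖ + β2)
    (hsg : α1 * α2 < 1) :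
    ‖e1‖ ≤ (‖u1‖ + α2 * ‖u2‖ + β2 + α2 * β1) / (1 - α1 * α2) ∧
    ‖e2‖ ≤ (‖u2‖ + α1 * ‖u1‖ + β1 + α1 * β2) / (1 - α1 * α2) := by
  have hd : 0 < 1 - α1 * α2 := by linarith
  have h1 : ‖e1‖ ≤ ‖u1‖ + ‖y2‖ := hfb1 ▸ norm_add_le _ _
  have h2 : ‖e2‖ ≤ ‖u2‖ + ‖y1‖ := hfb2 ▸ norm_add_le _ _
  have ha : ‖e1‖ ≤ ‖u1‖ + α2 * ‖e2‖ + β2 := by linarith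
  have hb : ‖e2‖ ≤ ‖u2‖ + α1 * ‖e1‖ + β1 := by linarith
  constructor
  · rw [le_div_iff₀ hd]
    nlinarith [mul_le_mul_of_nonneg_left hb hα2]
  · rw [le_div_iff₀ hd]
    nlinarith [mul_le_mul_of_nonneg_left ha hα1]
end

section
/- ℓ2 gain bound for monotone packet selection (protocol P1): Let τ̄ ≥ 1 be a natural number, let v : ℕ → ℝ be square-summable, and define a : ℤ → ℝ by a_j = ∑_{i=0}^{j} v_i for j ≥ 0 and a_j = 0 for j < 0. Let s : ℕ → ℤ be a nondecreasing selection function satisfying |s(k) − k| ≤ τ̄ for all k. Then the output sequence w defined by w_k = a_{s(k)} − a_k is square-summable and satisfies ‖w‖₂ ≤ τ̄·‖v‖₂. -/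
/-- Counting lemma: each index `i` lies in at most `τ` of the windows. -/
lemma count_bound (τ : ℕ) (s : ℕ → ℤ) (hmono : Monotone s)
    (hs : ∀ k : ℕ, |s k - (k : ℤ)| ≤ (τ : ℤ)) (i : ℕ) (K : Finset ℕ) :
    (K.filter fun k =>
      i ∈ Finset.Ico (min ((s k + 1).toNat) (k + 1)) (max ((s k + 1).toNat) (k + 1))).card
      ≤ τ := by
  set T := K.filter fun k =>
      i ∈ Finset.Ico (min ((s k + 1).toNat) (k + 1)) (max ((s k + 1).toNat) (k + 1)) with hT
  by_cases h : T.Nonempty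
  · have hsub : T ⊆ Finset.Ico (T.min' h) (T.min' h + τ) := by
      intro k hk
      have hm := T.min'_mem h
      have h1 : T.min' h ≤ k := Finset.min'_le T k hk
      have hk' := (Finset.mem_filter.1 hk).2
      have hm' := (Finset.mem_filter.1 hm).2
      rw [Finset.mem_Ico] at hk' hm'
      have hmono' : s (T.min' h) ≤ s k := hmono h1
      have ha1 := abs_le.1 (hs k)
      have ha2 := abs_le.1 (hs (T.min' h))
      rw [Finset.mem_Ico]
      omega
    calc T.card ≤ (Finset.Ico (T.min' h) (T.min' h + τ)).card := Finset.card_le_card hsub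
      _ = τ := by rw [Nat.card_Ico]; omega
  · rw [Finset.not_nonempty_iff_eq_empty] at h
    simp [← hT, h]

/-- **ℓ2 gain bound for monotone packet selection (protocol P1).** -/
theorem l2_gain_monotone_selection (τ : ℕ) (hτ : 1 ≤ τ)
    (v : ℕ → ℝ) (hv : SqSummable v)
    (a : ℤ → ℝ)
    (ha : ∀ j : ℤ, a j = if 0 ≤ j then ∑ i ∈ Finset.range (j.toNat + 1), v i else 0)
    (s : ℕ → ℤ) (hmono : Monotone s)
    (hs : ∀ k : ℕ, |s k - (k : ℤ)| ≤ (τ : ℤ)) :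
    SqSummable (fun k => a (s k) - a (k : ℤ)) ∧
    l2norm (fun k => a (s k) - a (k : ℤ)) ≤ (τ : ℝ) * l2norm v := by
  have ha' : ∀ j : ℤ, a j = ∑ i ∈ Finset.range ((j + 1).toNat), v i := by
    intro j
    rw [ha]
    split_ifs with h
    · have h1 : (j + 1).toNat = j.toNat + 1 := by omega
      rw [h1]
    · have h0 : (j + 1).toNat = 0 := by omega
      rw [h0]; simp
  -- the window of indices affected at time k
  set I : ℕ → Finset ℕ := fun k =>
    Finset.Ico (min ((s k + 1).toNat) (k + 1)) (max ((s k + 1).toNat) (k + 1)) with hI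
  -- pointwise bound via Cauchy-Schwarz
  have hb : ∀ k : ℕ, (a (s k) - a (k : ℤ)) ^ 2 ≤ (τ : ℝ) * ∑ i ∈ I k, v i ^ 2 := by
    intro k
    have ha1 := abs_le.1 (hs k)
    have hqk : ((k : ℤ) + 1).toNat = k + 1 := by omega
    have hcard : (I k).card ≤ τ := by
      rw [hI]; dsimp only
      rw [Nat.card_Ico]; omega
    have hdiff : (a (s k) - a (k : ℤ)) ^ 2 = (∑ i ∈ I k, v i) ^ 2 := by
      rw [ha' (s k), ha' (k : ℤ), hqk, hI]; dsimp only
      rcases le_total ((s k + 1).toNat) (k + 1) with h | h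
      · rw [min_eq_left h, max_eq_right h, Finset.sum_Ico_eq_sub _ h]; ring
      · rw [min_eq_right h, max_eq_left h, Finset.sum_Ico_eq_sub _ h]
    rw [hdiff]
    calc (∑ i ∈ I k, v i) ^ 2 ≤ ((I k).card : ℝ) * ∑ i ∈ I k, v i ^ 2 :=
          sq_sum_le_card_mul_sum_sq
      _ ≤ (τ : ℝ) * ∑ i ∈ I k, v i ^ 2 := by
          apply mul_le_mul_of_nonneg_right (by exact_mod_cast hcard)
          exact Finset.sum_nonneg fun i _ => sq_nonneg _
  -- the key finite-sum bound
  have key : ∀ K : Finset ℕ, ∑ k ∈ K, (a (s k) - a (k : ℤ)) ^ 2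
      ≤ (τ : ℝ) ^ 2 * ∑' i, v i ^ 2 := by
    intro K
    set B := K.sup id + τ + 1 with hB
    have hsub : ∀ k ∈ K, I k ⊆ Finset.range B := by
      intro k hk i hi
      rw [hI] at hi; rw [Finset.mem_Ico] at hi
      have hk' : k ≤ K.sup id := Finset.le_sup (f := id) hk
      have ha1 := abs_le.1 (hs k)
      rw [Finset.mem_range]
      omega
    have step1 : ∑ k ∈ K, (a (s k) - a (k : ℤ)) ^ 2
        ≤ (τ : ℝ) * ∑ k ∈ K, ∑ i ∈ I k, v i ^ 2 := by
      rw [Finset.mul_sum]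
      exact Finset.sum_le_sum fun k _ => hb k
    have swap : ∑ k ∈ K, ∑ i ∈ I k, v i ^ 2
        = ∑ i ∈ Finset.range B, ((K.filter fun k => i ∈ I k).card : ℝ) * v i ^ 2 := by
      calc ∑ k ∈ K, ∑ i ∈ I k, v i ^ 2
          = ∑ k ∈ K, ∑ i ∈ Finset.range B, if i ∈ I k then v i ^ 2 else 0 := by
            refine Finset.sum_congr rfl fun k hk => ?_
            rw [Finset.sum_ite_mem, Finset.inter_eq_right.2 (hsub k hk)]
        _ = ∑ i ∈ Finset.range B, ∑ k ∈ K, if i ∈ I k then v i ^ 2 else 0 :=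
            Finset.sum_comm
        _ = ∑ i ∈ Finset.range B, ((K.filter fun k => i ∈ I k).card : ℝ) * v i ^ 2 := by
            refine Finset.sum_congr rfl fun i _ => ?_
            rw [Finset.sum_ite, Finset.sum_const, Finset.sum_const_zero, add_zero,
              nsmul_eq_mul]
    have count : ∀ i ∈ Finset.range B,
        ((K.filter fun k => i ∈ I k).card : ℝ) * v i ^ 2 ≤ (τ : ℝ) * v i ^ 2 := by
      intro i _
      apply mul_le_mul_of_nonneg_right _ (sq_nonneg _)
      exact_mod_cast count_bound τ s hmono hs i K
    have tail : ∑ i ∈ Finset.range B, v i ^ 2 ≤ ∑' i, v i ^ 2 :=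
      Summable.sum_le_tsum (Finset.range B) (fun i _ => sq_nonneg _) hv
    calc ∑ k ∈ K, (a (s k) - a (k : ℤ)) ^ 2
        ≤ (τ : ℝ) * ∑ k ∈ K, ∑ i ∈ I k, v i ^ 2 := step1
      _ = (τ : ℝ) * ∑ i ∈ Finset.range B, ((K.filter fun k => i ∈ I k).card : ℝ) * v i ^ 2 := by
          rw [swap]
      _ ≤ (τ : ℝ) * ∑ i ∈ Finset.range B, (τ : ℝ) * v i ^ 2 := by
          apply mul_le_mul_of_nonneg_left (Finset.sum_le_sum count) (by positivity)
      _ = (τ : ℝ) ^ 2 * ∑ i ∈ Finset.range B, v i ^ 2 := by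
          rw [← Finset.mul_sum]; ring
      _ ≤ (τ : ℝ) ^ 2 * ∑' i, v i ^ 2 := by
          apply mul_le_mul_of_nonneg_left tail (by positivity)
  have hsum : SqSummable fun k => a (s k) - a (k : ℤ) :=
    summable_of_sum_le (fun k => sq_nonneg _) key
  refine ⟨hsum, ?_⟩
  have htsum : ∑' k, (a (s k) - a (k : ℤ)) ^ 2 ≤ (τ : ℝ) ^ 2 * ∑' i, v i ^ 2 :=
    Summable.tsum_le_of_sum_le hsum key
  calc l2norm (fun k => a (s k) - a (k : ℤ))
      ≤ Real.sqrt ((τ : ℝ) ^ 2 * ∑' i, v i ^ 2) := Real.sqrt_le_sqrt htsum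
    _ = (τ : ℝ) * l2norm v := by
        rw [l2norm, Real.sqrt_mul (sq_nonneg _), Real.sqrt_sq (by positivity)]
end
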